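/- arXiv:2312.02574 — 3 statements merged into one kernel-verified Lean document; each statement's English description precedes it below -/
import Mathlib

section
/- Let P be a finite poset and [φ₀, φ_k] = {φ₀,…,φ_k} an interval in P, enumerated compatibly with the order. Define the k×k matrix M with rows indexed by 0,…,k−1 and columns by 1,…,k, with m_{ij} = 1 if φᵢ ≤ φⱼ and 0 otherwise. Then the Möbius function satisfies μ([φ₀, φ_k]) = (−1)^k det M. -/
open Classical

/-! The row vector `v i = μ(φ₀, φᵢ)` satisfies `v Z = e₀` for the zeta matrix `Z` of the
interval (this is `μ * ζ = δ`), and `Z` is unitriangular because the enumeration is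
compatible with the order. Hence `v` is row `0` of `Z⁻¹ = adj Z`, so `μ(φ₀, φ_k)` is the
`(0, k)` cofactor of `Z`, whose minor is `M`. -/

open Finset Matrix IncidenceAlgebra

namespace IncidenceAlgebra

variable {ι α : Type*} (R : Type*)

def zetaMatrix [Zero R] [One R] [LE α] [DecidableLE α] (f : ι → α) : Matrix ι ι R :=
  of fun i j => zeta R (f i) (f j)

variable {R}

lemma zetaMatrix_apply [Zero R] [One R] [LE α] [DecidableLE α] (f : ι → α) (i j : ι) :
    zetaMatrix R f i j = if f i ≤ f j then 1 else 0 := rfl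

lemma blockTriangular_zetaMatrix [Zero R] [One R] [LE α] [DecidableLE α] [LinearOrder ι]
    {f : ι → α} (hf : ∀ i j, f i ≤ f j → i ≤ j) : (zetaMatrix R f).BlockTriangular id :=
  fun i j hji => if_neg fun h => (hf i j h).not_gt hji

lemma det_zetaMatrix [CommRing R] [Preorder α] [DecidableLE α] [Fintype ι] [LinearOrder ι]
    {f : ι → α} (hf : ∀ i j, f i ≤ f j → i ≤ j) : (zetaMatrix R f).det = 1 := by
  simp [det_of_isUpperTriangular (blockTriangular_zetaMatrix hf), zetaMatrix_apply]

lemma mu_vecMul_zetaMatrix [Ring R] [PartialOrder α] [LocallyFiniteOrder α] [DecidableEq α]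
    [DecidableLE α] [Fintype ι] [DecidableEq ι] {f : ι → α} {a b : α}
    (hf : Set.BijOn f Set.univ (Set.Icc a b)) {i₀ : ι} (hi₀ : f i₀ = a) :
    (fun i => mu R a (f i)) ᵥ* zetaMatrix R f = Pi.single i₀ 1 := by
  ext j
  have hjb : f j ≤ b := (hf.mapsTo (Set.mem_univ j)).2
  calc ∑ i, mu R a (f i) * zeta R (f i) (f j)
      = ∑ x ∈ Icc a b, mu R a x * zeta R x (f j) :=
        sum_nbij f (fun i _ => by simpa using hf.mapsTo (Set.mem_univ i))
          (by simpa using hf.injOn) (by simpa using hf.surjOn) (fun _ _ => rfl)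
    _ = (mu R * zeta R : IncidenceAlgebra R α) a (f j) := by
        rw [mul_apply]
        refine (sum_subset (Icc_subset_Icc_right hjb) fun x hx hxj => ?_).symm
        rw [zeta_apply, if_neg fun hxj' => hxj (mem_Icc.2 ⟨(mem_Icc.1 hx).1, hxj'⟩), mul_zero]
    _ = (Pi.single i₀ 1 : ι → R) j := by
        simp only [mu_mul_zeta, one_apply, ← hi₀, hf.injOn.eq_iff trivial trivial,
          Pi.single_apply, eq_comm]

end IncidenceAlgebra

namespace Matrix

variable {n R : Type*} [Fintype n] [DecidableEq n] [CommRing R]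

lemma det_mul_eq_adjugate_apply_of_vecMul_eq_single {A : Matrix n n R} {v : n → R} {i : n}
    (hv : v ᵥ* A = Pi.single i 1) (j : n) : A.det * v j = A.adjugate i j := by
  have : A.det • v = Pi.single i 1 ᵥ* A.adjugate := by
    rw [← hv, vecMul_vecMul, mul_adjugate, vecMul_smul, vecMul_one]
  simpa using congrFun this j

end Matrix

theorem moebius_eq_det_general {α : Type*} [PartialOrder α] [LocallyFiniteOrder α] [DecidableEq α]
    (k : ℕ) (φ : ℕ → α)
    (hbij : Set.BijOn φ (Set.Iic k) (Set.Icc (φ 0) (φ k)))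
    (hcompat : ∀ i ≤ k, ∀ j ≤ k, φ i ≤ φ j → i ≤ j) :
    IncidenceAlgebra.mu ℤ (φ 0) (φ k)
      = (-1 : ℤ) ^ k *
        Matrix.det (Matrix.of fun i j : Fin k =>
          if φ (i : ℕ) ≤ φ ((j : ℕ) + 1) then (1 : ℤ) else 0) := by
  have hval : Set.BijOn Fin.val Set.univ (Set.Iic k) :=
    ⟨fun i _ => Fin.is_le i, Fin.val_injective.injOn,
      fun n hn => ⟨⟨n, Nat.lt_succ_of_le hn⟩, trivial, rfl⟩⟩
  have hmono : ∀ i j, (φ ∘ Fin.val) i ≤ (φ ∘ Fin.val) j → i ≤ j := fun i j h =>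
    hcompat _ (Fin.is_le i) _ (Fin.is_le j) h
  have key := det_mul_eq_adjugate_apply_of_vecMul_eq_single
    (mu_vecMul_zetaMatrix (R := ℤ) (hbij.comp hval) (i₀ := 0) rfl) (Fin.last k)
  rw [det_zetaMatrix hmono, one_mul, adjugate_fin_succ_eq_det_submatrix, Fin.succAbove_last,
    Fin.succAbove_zero] at key
  simp only [Function.comp_apply, Fin.val_last, Fin.val_zero, add_zero] at key
  convert key using 3
  ext i j
  rfl

/-- A determinantal expression for the Möbius function of a finite interval
`[φ 0, φ k]` of a poset, enumerated compatibly with the order: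
`μ(φ 0, φ k) = (-1)^k det M` where `M` is the `k × k` matrix with rows `φ 0, …, φ (k-1)`,
columns `φ 1, …, φ k`, and entries `1` if `φ i ≤ φ j` and `0` otherwise. -/
theorem moebius_eq_det {α : Type*} [PartialOrder α] [LocallyFiniteOrder α] [DecidableEq α]
    (k : ℕ) (hk : 0 < k) (φ : ℕ → α)
    (hbij : Set.BijOn φ (Set.Iic k) (Set.Icc (φ 0) (φ k)))
    (hcompat : ∀ i ≤ k, ∀ j ≤ k, φ i ≤ φ j → i ≤ j) :
    IncidenceAlgebra.mu ℤ (φ 0) (φ k)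
      = (-1 : ℤ) ^ k *
        Matrix.det (Matrix.of fun i j : Fin k =>
          if φ (i : ℕ) ≤ φ ((j : ℕ) + 1) then (1 : ℤ) else 0) :=
  moebius_eq_det_general k φ hbij hcompat
end

section
/- Let Q be a quiver whose underlying graph is a Dynkin diagram of type ADE, with Euler form ⟨−,−⟩ and Killing form (α,β) = ⟨α,β⟩ + ⟨β,α⟩. Let γ, β be positive roots (Schur roots) with β ≤ γ. If γ − β = α₁ ⊕ ⋯ ⊕ α_s is the Kac canonical decomposition of γ − β, then s ≤ 2 − (γ, β). -/
/-!
Expanding the Killing form gives `E (γ - β) (γ - β) = E γ γ + E β β - (γ, β) = 2 - (γ, β)`.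
Expanding `E (∑ αᵢ) (∑ αⱼ)` instead, the `s` diagonal terms are `E αᵢ αᵢ = 1` and the
off-diagonal terms `hom(αᵢ, αⱼ)` are nonnegative, so the same quantity is at least `s`.
-/

namespace LinearMap.BilinForm

variable {R M : Type*} [CommRing R] [AddCommGroup M] [Module R M]

theorem apply_sub_sub (E : LinearMap.BilinForm R M) (x y : M) :
    E (x - y) (x - y) = E x x + E y y - (E x y + E y x) := by
  simp only [map_sub, LinearMap.sub_apply]
  ring

theorem apply_sum_sum {ι : Type*} [Fintype ι] (E : LinearMap.BilinForm R M) (a : ι → M) :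
    E (∑ i, a i) (∑ i, a i) = ∑ i, ∑ j, E (a i) (a j) := by
  simp only [map_sum, LinearMap.coe_sum, Finset.sum_apply]
  exact Finset.sum_comm

theorem card_le_apply_sum_sum [PartialOrder R] [IsOrderedRing R]
    {ι : Type*} [Fintype ι] (E : LinearMap.BilinForm R M) (a : ι → M)
    (hdiag : ∀ i, E (a i) (a i) = 1) (hoff : ∀ i j, i ≠ j → 0 ≤ E (a i) (a j)) :
    (Fintype.card ι : R) ≤ E (∑ i, a i) (∑ i, a i) := by
  have hrow : ∀ i ∈ Finset.univ, (1 : R) ≤ ∑ j, E (a i) (a j) := fun i _ => by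
    rw [← hdiag i]
    refine Finset.single_le_sum (f := fun j => E (a i) (a j)) (fun j _ => ?_) (Finset.mem_univ i)
    rcases eq_or_ne i j with rfl | hij
    · exact (hdiag i).symm ▸ zero_le_one
    · exact hoff i j hij
  calc (Fintype.card ι : R) = ∑ _i : ι, (1 : R) := by simp
    _ ≤ ∑ i, ∑ j, E (a i) (a j) := Finset.sum_le_sum hrow
    _ = E (∑ i, a i) (∑ i, a i) := (apply_sum_sum E a).symm

end LinearMap.BilinForm

theorem canonical_decomposition_length_le_general
    (n : ℕ) (E : LinearMap.BilinForm ℤ (Fin n → ℤ))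
    (β γ : Fin n → ℤ)
    (hβschur : E β β = 1) (hγschur : E γ γ = 1)
    (s : ℕ) (a : Fin s → (Fin n → ℤ))
    (hdec : γ - β = ∑ i, a i)
    (hschur : ∀ i, E (a i) (a i) = 1)
    (hhom : ∀ i j, i ≠ j → 0 ≤ E (a i) (a j)) :
    (s : ℤ) ≤ 2 - (E γ β + E β γ) := by
  have hkilling : E (γ - β) (γ - β) = 2 - (E γ β + E β γ) := by
    rw [LinearMap.BilinForm.apply_sub_sub, hγschur, hβschur]
    ring
  have hlength : (s : ℤ) ≤ E (γ - β) (γ - β) := by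
    simpa [hdec] using LinearMap.BilinForm.card_le_apply_sum_sum E a hschur hhom
  exact hkilling ▸ hlength

/-- For a quiver of Dynkin type ADE, with positive definite Euler form `E` on dimension
vectors, Schur roots being the `α` with `E α α = 1`: if `β ≤ γ` are Schur (positive)
roots and `γ - β = α₁ ⊕ ⋯ ⊕ α_s` is the Kac canonical decomposition (the `αᵢ` are
Schur roots with vanishing `ext`, so `E (αᵢ) (αⱼ) = hom(αᵢ, αⱼ) ≥ 0` for `i ≠ j`),
then `s ≤ 2 - (γ, β)` where `(γ, β) = E γ β + E β γ` is the Killing form. -/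
theorem canonical_decomposition_length_le
    (n : ℕ) (E : LinearMap.BilinForm ℤ (Fin n → ℤ))
    (hposdef : ∀ x : Fin n → ℤ, x ≠ 0 → 0 < E x x)
    (β γ : Fin n → ℤ)
    (hβschur : E β β = 1) (hγschur : E γ γ = 1)
    (hβpos : ∀ i, 0 ≤ β i) (hγpos : ∀ i, 0 ≤ γ i)
    (hle : ∀ i, β i ≤ γ i)
    (s : ℕ) (a : Fin s → (Fin n → ℤ))
    (hdec : γ - β = ∑ i, a i)
    (hschur : ∀ i, E (a i) (a i) = 1)
    (hhom : ∀ i j, i ≠ j → 0 ≤ E (a i) (a j)) :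
    (s : ℤ) ≤ 2 - (E γ β + E β γ) :=
  canonical_decomposition_length_le_general n E β γ hβschur hγschur s a hdec hschur hhom
end

section
/- In the root system G₂ with simple roots α₁ (short) and α₂, the only triples of positive roots β < φ < γ with β + γ a root and ]β;γ[ ∋ φ that are 'irreducible' (cannot be reduced to a proper subspace) are: (α₁, α₁+α₂, 2α₁+α₂), (α₂, α₁+α₂, 3α₁+α₂), and (α₂, 2α₁+α₂, 3α₁+α₂). -/
/-- Roots of `G₂` written in coordinates with respect to the simple roots `α₁, α₂`. -/
abbrev VG2 := Fin 2 → ℚ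

/-- The short simple root `α₁`. -/
def a1 : VG2 := ![1, 0]

/-- The long simple root `α₂`. -/
def a2 : VG2 := ![0, 1]

/-- The positive roots of `G₂`. -/
def PosG2 : Set VG2 := {![1, 0], ![0, 1], ![1, 1], ![2, 1], ![3, 1], ![3, 2]}

/-- The roots of `G₂`. -/
def PhiG2 : Set VG2 := PosG2 ∪ (fun x => -x) '' PosG2

/-- `x < y` iff `y - x` is a nonzero nonnegative integer combination of `α₁, α₂`. -/
def rootLTG2 (x y : VG2) : Prop :=
  (∃ c1 c2 : ℕ, y - x = (c1 : ℚ) • a1 + (c2 : ℚ) • a2) ∧ x ≠ y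

/-- Nonnegative rational combinations of elements of `S`. -/
def posConeG2 (S : Set VG2) : Set VG2 :=
  { x | ∃ (N : ℕ) (f : Fin N → VG2) (c : Fin N → ℚ),
      (∀ i, f i ∈ S ∧ 0 ≤ c i) ∧ x = ∑ i, c i • f i }

/-- A triple `β < φ < γ` is irreducible if there is no proper linear subspace `F`
containing `β` such that `φ - β` and `γ - φ` are nonnegative combinations of the
positive roots lying in `F`. -/
def IrredTripleG2 (β φ γ : VG2) : Prop :=
  ¬ ∃ F : Submodule ℚ VG2, F ≠ ⊤ ∧ β ∈ F ∧
      φ - β ∈ posConeG2 ((F : Set VG2) ∩ PosG2) ∧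
      γ - φ ∈ posConeG2 ((F : Set VG2) ∩ PosG2)

lemma lt_ne {x y : VG2} (h : rootLTG2 x y) : x ≠ y := by
  obtain ⟨-, h⟩ := h; exact h

lemma mem_a : (![1,0] : VG2) ∈ PosG2 := Or.inl rfl
lemma mem_b : (![0,1] : VG2) ∈ PosG2 := Or.inr (Or.inl rfl)
lemma mem_c : (![1,1] : VG2) ∈ PosG2 := Or.inr (Or.inr (Or.inl rfl))
lemma mem_d : (![2,1] : VG2) ∈ PosG2 := Or.inr (Or.inr (Or.inr (Or.inl rfl)))
lemma mem_e : (![3,1] : VG2) ∈ PosG2 := Or.inr (Or.inr (Or.inr (Or.inr (Or.inl rfl))))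
lemma mem_f : (![3,2] : VG2) ∈ PosG2 := Or.inr (Or.inr (Or.inr (Or.inr (Or.inr rfl))))

lemma lt_le {x y : VG2} (h : rootLTG2 x y) : x 0 ≤ y 0 ∧ x 1 ≤ y 1 := by
  obtain ⟨⟨c1, c2, hc⟩, -⟩ := h
  have h0 := congrFun hc 0
  have h1 := congrFun hc 1
  simp [a1, a2] at h0 h1
  constructor
  · nlinarith [Nat.cast_nonneg (α := ℚ) c1]
  · nlinarith [Nat.cast_nonneg (α := ℚ) c2]

lemma phi_coord {x : VG2} (h : x ∈ PhiG2) :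
    (x 0 = 1 ∧ x 1 = 0) ∨ (x 0 = 0 ∧ x 1 = 1) ∨ (x 0 = 1 ∧ x 1 = 1) ∨
    (x 0 = 2 ∧ x 1 = 1) ∨ (x 0 = 3 ∧ x 1 = 1) ∨ (x 0 = 3 ∧ x 1 = 2) ∨
    (x 0 = -1 ∧ x 1 = 0) ∨ (x 0 = 0 ∧ x 1 = -1) ∨ (x 0 = -1 ∧ x 1 = -1) ∨
    (x 0 = -2 ∧ x 1 = -1) ∨ (x 0 = -3 ∧ x 1 = -1) ∨ (x 0 = -3 ∧ x 1 = -2) := by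
  simp only [PhiG2, PosG2, Set.mem_union, Set.mem_image, Set.mem_insert_iff,
    Set.mem_singleton_iff] at h
  rcases h with (rfl|rfl|rfl|rfl|rfl|rfl) | ⟨y, (rfl|rfl|rfl|rfl|rfl|rfl), rfl⟩ <;>
    · simp only [Pi.neg_apply, Matrix.cons_val_zero, Matrix.cons_val_one, Matrix.head_cons]
      norm_num

lemma cone_sub {F : Submodule ℚ VG2} {x : VG2}
    (h : x ∈ posConeG2 ((F : Set VG2) ∩ PosG2)) : x ∈ F := by
  obtain ⟨N, f, c, h1, rfl⟩ := h
  exact Submodule.sum_mem _ fun i _ => Submodule.smul_mem _ _ ((h1 i).1.1)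

lemma span_top (F : Submodule ℚ VG2) (h1 : a1 ∈ F) (h2 : a2 ∈ F) : F = ⊤ := by
  rw [Submodule.eq_top_iff']
  intro x
  have hx : x = x 0 • a1 + x 1 • a2 := by
    funext i; fin_cases i <;> norm_num [a1, a2]
  rw [hx]
  exact add_mem (Submodule.smul_mem _ _ h1) (Submodule.smul_mem _ _ h2)

lemma irred_of (β φ γ : VG2) (h1 : ∀ F : Submodule ℚ VG2, β ∈ F → φ - β ∈ F → a1 ∈ F ∧ a2 ∈ F) :
    IrredTripleG2 β φ γ := by
  rintro ⟨F, hne, hb, hc1, -⟩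
  obtain ⟨g1, g2⟩ := h1 F hb (cone_sub hc1)
  exact hne (span_top F g1 g2)

lemma eq_c : a1 + a2 = ![1, 1] := by funext i; fin_cases i <;> norm_num [a1, a2]
lemma eq_d : (2 : ℚ) • a1 + a2 = ![2, 1] := by funext i; fin_cases i <;> norm_num [a1, a2]
lemma eq_e : (3 : ℚ) • a1 + a2 = ![3, 1] := by funext i; fin_cases i <;> norm_num [a1, a2]

lemma goal1 : ((![1,0] : VG2), (![1,1] : VG2), (![2,1] : VG2)) = (a1, a1 + a2, (2 : ℚ) • a1 + a2) := by
  rw [eq_c, eq_d]; rfl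
lemma goal2 : ((![0,1] : VG2), (![1,1] : VG2), (![3,1] : VG2)) = (a2, a1 + a2, (3 : ℚ) • a1 + a2) := by
  rw [eq_c, eq_e]; rfl
lemma goal3 : ((![0,1] : VG2), (![2,1] : VG2), (![3,1] : VG2)) = (a2, (2 : ℚ) • a1 + a2, (3 : ℚ) • a1 + a2) := by
  rw [eq_d, eq_e]; rfl


/-- The irreducible triples `β < φ < γ` of positive roots of `G₂` with `β + γ` a root
are exactly `(α₁, α₁+α₂, 2α₁+α₂)`, `(α₂, α₁+α₂, 3α₁+α₂)` and `(α₂, 2α₁+α₂, 3α₁+α₂)`. -/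
theorem G2_irreducible_triples (β φ γ : VG2) :
    (β ∈ PosG2 ∧ φ ∈ PosG2 ∧ γ ∈ PosG2 ∧ rootLTG2 β φ ∧ rootLTG2 φ γ ∧
        β + γ ∈ PhiG2 ∧ IrredTripleG2 β φ γ)
      ↔ ((β, φ, γ) = (a1, a1 + a2, (2 : ℚ) • a1 + a2) ∨
         (β, φ, γ) = (a2, a1 + a2, (3 : ℚ) • a1 + a2) ∨
         (β, φ, γ) = (a2, (2 : ℚ) • a1 + a2, (3 : ℚ) • a1 + a2)) := by
  constructor
  · rintro ⟨hβ, hφ, hγ, h4, h5, h6, -⟩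
    simp only [PosG2, Set.mem_insert_iff, Set.mem_singleton_iff] at hβ hφ hγ
    rcases hβ with rfl|rfl|rfl|rfl|rfl|rfl <;>
    rcases hφ with rfl|rfl|rfl|rfl|rfl|rfl <;>
    rcases hγ with rfl|rfl|rfl|rfl|rfl|rfl <;>
    first
      | exact absurd rfl (lt_ne h4)
      | exact absurd rfl (lt_ne h5)
      | exact Or.inl goal1
      | exact Or.inr (Or.inl goal2)
      | exact Or.inr (Or.inr goal3)
      | (have := lt_le h4
         simp only [Matrix.cons_val_zero, Matrix.cons_val_one, Matrix.head_cons] at this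
         norm_num at this
         done)
      | (have := lt_le h5
         simp only [Matrix.cons_val_zero, Matrix.cons_val_one, Matrix.head_cons] at this
         norm_num at this
         done)
      | (have := phi_coord h6
         simp only [Pi.add_apply, Matrix.cons_val_zero, Matrix.cons_val_one,
           Matrix.head_cons] at this
         norm_num at this
         done)
  · rintro (h|h|h) <;>
      rw [Prod.mk.injEq, Prod.mk.injEq] at h <;>
      obtain ⟨rfl, rfl, rfl⟩ := h
    · refine ⟨mem_a, by rw [eq_c]; exact mem_c, by rw [eq_d]; exact mem_d, ?_, ?_, ?_, ?_⟩
      · exact ⟨⟨0, 1, by funext i; fin_cases i <;> norm_num [a1, a2]⟩,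
          fun h => by have := congrFun h 1; rw [eq_c] at this; norm_num [a1] at this⟩
      · exact ⟨⟨1, 0, by funext i; fin_cases i <;> norm_num [a1, a2]⟩,
          fun h => by have := congrFun h 0; rw [eq_c, eq_d] at this; norm_num at this⟩
      · have he : a1 + ((2 : ℚ) • a1 + a2) = ![3, 1] := by
          funext i; fin_cases i <;> norm_num [a1, a2]
        rw [he]; exact Or.inl mem_e
      · refine irred_of _ _ _ fun F hb hd => ⟨hb, ?_⟩
        have he : a2 = a1 + a2 - a1 := by ring
        rw [he]; exact hd
    · refine ⟨mem_b, by rw [eq_c]; exact mem_c, by rw [eq_e]; exact mem_e, ?_, ?_, ?_, ?_⟩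
      · exact ⟨⟨1, 0, by funext i; fin_cases i <;> norm_num [a1, a2]⟩,
          fun h => by have := congrFun h 0; rw [eq_c] at this; norm_num [a2] at this⟩
      · exact ⟨⟨2, 0, by funext i; fin_cases i <;> norm_num [a1, a2]⟩,
          fun h => by have := congrFun h 0; rw [eq_c, eq_e] at this; norm_num at this⟩
      · have he : a2 + ((3 : ℚ) • a1 + a2) = ![3, 2] := by
          funext i; fin_cases i <;> norm_num [a1, a2]
        rw [he]; exact Or.inl mem_f
      · refine irred_of _ _ _ fun F hb hd => ⟨?_, hb⟩
        have he : a1 = a1 + a2 - a2 := by ring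
        rw [he]; exact hd
    · refine ⟨mem_b, by rw [eq_d]; exact mem_d, by rw [eq_e]; exact mem_e, ?_, ?_, ?_, ?_⟩
      · exact ⟨⟨2, 0, by funext i; fin_cases i <;> norm_num [a1, a2]⟩,
          fun h => by have := congrFun h 0; rw [eq_d] at this; norm_num [a2] at this⟩
      · exact ⟨⟨1, 0, by funext i; fin_cases i <;> norm_num [a1, a2]⟩,
          fun h => by have := congrFun h 0; rw [eq_d, eq_e] at this; norm_num at this⟩
      · have he : a2 + ((3 : ℚ) • a1 + a2) = ![3, 2] := by
          funext i; fin_cases i <;> norm_num [a1, a2]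
        rw [he]; exact Or.inl mem_f
      · refine irred_of _ _ _ fun F hb hd => ⟨?_, hb⟩
        have h1 : (2:ℚ)⁻¹ • ((2 : ℚ) • a1 + a2 - a2) ∈ F := Submodule.smul_mem _ _ hd
        have he : a1 = (2:ℚ)⁻¹ • ((2 : ℚ) • a1 + a2 - a2) := by
          funext i; fin_cases i <;> norm_num [a1, a2]
        rw [he]; exact h1
end
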